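/- In the formal power series ring ℚ[[s, q, t]], the identity ∏_{m=1}^∞ (1 + s^m q^m t^{2m−1})^2 / ((1 − s^m q^{m−1} t^{2m−2})(1 − s^m q^{m+1} t^{2m})) = ∑_{n=0}^∞ s^n ∑_{ν = 1^{a_1}⋯n^{a_n} ⊢ n} q^{n − l(ν)} t^{2n − 2l(ν)} ∏_{i=1}^n ( ∑_{r+u_1+u_2+v = a_i, u_1,u_2 ∈ {0,1}} q^{u_1+u_2+2v} t^{2u_1+2u_2+2v - (u_1+u_2)} ) holds, where l(ν) = ∑ a_i and in the inner sum r, v are nonnegative integers while u_1, u_2 ∈ {0,1} (the two odd directions contribute exterior powers). -/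

import Mathlib

open MvPowerSeries

/-- The variables `s`, `q`, `t` of `ℚ[[s,q,t]]`. -/
noncomputable abbrev PSs : MvPowerSeries (Fin 3) ℚ := MvPowerSeries.X 0
noncomputable abbrev PSq : MvPowerSeries (Fin 3) ℚ := MvPowerSeries.X 1
noncomputable abbrev PSt : MvPowerSeries (Fin 3) ℚ := MvPowerSeries.X 2

/-- The factor of the infinite product for index `m ≥ 1` in the `Ã₀` case:
`(1 + s^m q^m t^{2m−1})^2 / ((1 − s^m q^{m−1} t^{2m−2})(1 − s^m q^{m+1} t^{2m}))`. -/
noncomputable def prodFactorA (m : ℕ) : MvPowerSeries (Fin 3) ℚ :=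
  (1 + PSs ^ m * PSq ^ m * PSt ^ (2 * m - 1)) ^ 2
    * (1 - PSs ^ m * PSq ^ (m - 1) * PSt ^ (2 * m - 2))⁻¹
    * (1 - PSs ^ m * PSq ^ (m + 1) * PSt ^ (2 * m))⁻¹

/-- The coefficient of `s^n` on the right-hand side: the sum over partitions
`ν = 1^{a_1} ⋯ n^{a_n}` of `n` of `q^{n−l(ν)} t^{2n−2l(ν)}` times
`∏_i ∑_{r+u₁+u₂+v=a_i, u₁,u₂ ∈ {0,1}} q^{u₁+u₂+2v} t^{2u₁+2u₂+2v−(u₁+u₂)}`. -/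
noncomputable def partitionSumA (n : ℕ) : MvPowerSeries (Fin 3) ℚ :=
  ∑ ν : Nat.Partition n,
    PSq ^ (n - ν.parts.card) * PSt ^ (2 * n - 2 * ν.parts.card) *
      ∏ i ∈ Finset.Icc 1 n,
        ∑ x ∈ (Finset.Nat.antidiagonalTuple 4 (Multiset.count i ν.parts)).filter
            (fun x => x 1 ≤ 1 ∧ x 2 ≤ 1),
          PSq ^ (x 1 + x 2 + 2 * x 3)
            * PSt ^ (2 * x 1 + 2 * x 2 + 2 * x 3 - (x 1 + x 2))

/-!
Under `ℚ[[s,q,t]] ≃ ℚ[[q,t]][[s]]`, the factor of index `m + 1` is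
`(1 + a Y)² / ((1 - Y)(1 - a² Y))` with `Y = s^(m+1) (q t²)^m` and `a = q t`. Modulo `s^(n+1)`
the two geometric series truncate, so the factor is `∑_{j ≤ n} c_j Y^j` where `c_j` sums over
`j = r + u₁ + u₂ + v` with `u₁, u₂ ≤ 1`. Expanding the product of these polynomials, the terms of
`s`-degree `n` are indexed by multiplicity vectors `(a_1, …, a_n)` with `∑ i a_i = n`, i.e. by
partitions `ν ⊢ n`, and the `Y`-powers multiply to `s^n (q t²)^(n - l(ν))`.
-/

open Finset

lemma eq_geom_sum_of_mul_one_sub_eq_one {A : Type*} [Ring A] {x u : A} {N : ℕ}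
    (hx : x ^ N = 0) (hu : u * (1 - x) = 1) : u = ∑ i ∈ range N, x ^ i :=
  calc u = u * ((1 - x) * ∑ i ∈ range N, x ^ i) := by
        rw [mul_neg_geom_sum, hx, sub_zero, mul_one]
    _ = ∑ i ∈ range N, x ^ i := by rw [← mul_assoc, hu, one_mul]

/-- The coefficient of `Y ^ j` in `(1 + a Y) ^ 2 / ((1 - Y) (1 - c Y))`, with
`(x 0, x 1, x 2, x 3) = (r, u₁, u₂, v)`. -/
def factorCoeff {A : Type*} [CommSemiring A] (a c : A) (j : ℕ) : A :=
  ∑ x ∈ (Finset.Nat.antidiagonalTuple 4 j).filter (fun x => x 1 ≤ 1 ∧ x 2 ≤ 1),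
    a ^ (x 1 + x 2) * c ^ x 3

lemma map_factorCoeff {A B F : Type*} [CommSemiring A] [CommSemiring B] [FunLike F A B]
    [RingHomClass F A B] (f : F) (a c : A) (j : ℕ) :
    f (factorCoeff a c j) = factorCoeff (f a) (f c) j := by
  simp [factorCoeff]

lemma sum_piFinset_eq_sum_factorCoeff {A : Type*} [CommSemiring A] {a c Y : A} {N : ℕ}
    (hY : Y ^ N = 0) :
    ∑ x ∈ Fintype.piFinset ![range N, range 2, range 2, range N],
        a ^ (x 1 + x 2) * c ^ x 3 * Y ^ ∑ l, x l
      = ∑ j ∈ range N, factorCoeff a c j * Y ^ j := by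
  set S : Fin 4 → Finset ℕ := ![range N, range 2, range 2, range N]
  have hfiber : ∀ j ∈ range N, {x ∈ Fintype.piFinset S | ∑ l, x l < N ∧ ∑ l, x l = j}
      = (Finset.Nat.antidiagonalTuple 4 j).filter (fun x => x 1 ≤ 1 ∧ x 2 ≤ 1) := by
    intro j hj
    ext x
    simp only [mem_range] at hj
    simp [Fintype.mem_piFinset, Fin.forall_fin_succ, Finset.Nat.mem_antidiagonalTuple,
      Fin.sum_univ_four, S]
    omega
  calc ∑ x ∈ Fintype.piFinset S, a ^ (x 1 + x 2) * c ^ x 3 * Y ^ ∑ l, x l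
      = ∑ x ∈ Fintype.piFinset S with ∑ l, x l < N,
          a ^ (x 1 + x 2) * c ^ x 3 * Y ^ ∑ l, x l := by
        refine (sum_filter_of_ne fun x _ hx => ?_).symm
        by_contra! hN
        exact hx (by rw [pow_eq_zero_of_le hN hY, mul_zero])
    _ = ∑ j ∈ range N, ∑ x ∈ Fintype.piFinset S with ∑ l, x l < N ∧ ∑ l, x l = j,
          a ^ (x 1 + x 2) * c ^ x 3 * Y ^ ∑ l, x l := by
        simp only [← filter_filter]
        exact (sum_fiberwise_of_maps_to (fun x hx => mem_range.2 (mem_filter.1 hx).2) _).symm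
    _ = ∑ j ∈ range N, factorCoeff a c j * Y ^ j := by
        refine sum_congr rfl fun j hj => ?_
        rw [hfiber j hj, factorCoeff, sum_mul]
        exact sum_congr rfl fun x hx => by
          rw [Finset.Nat.mem_antidiagonalTuple.1 (mem_filter.1 hx).1]

lemma sq_mul_mul_eq_sum_factorCoeff {A : Type*} [CommRing A] {a c Y U W : A} {N : ℕ}
    (hY : Y ^ N = 0) (hU : U * (1 - Y) = 1) (hW : W * (1 - c * Y) = 1) :
    (1 + a * Y) ^ 2 * U * W = ∑ j ∈ range N, factorCoeff a c j * Y ^ j := by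
  set w : Fin 4 → A := ![1, a, a, c]
  have hodd : 1 + a * Y = ∑ u ∈ range 2, (a * Y) ^ u := by simp [sum_range_succ]
  have hexpand : (1 + a * Y) ^ 2 * U * W
      = ∏ l, ∑ k ∈ ![range N, range 2, range 2, range N] l, (w l * Y) ^ k := by
    rw [eq_geom_sum_of_mul_one_sub_eq_one hY hU,
      eq_geom_sum_of_mul_one_sub_eq_one (by rw [mul_pow, hY, mul_zero]) hW, hodd,
      Fin.prod_univ_four]
    simp [w]
    ring
  have hterm : ∀ x : Fin 4 → ℕ,
      ∏ l, (w l * Y) ^ x l = a ^ (x 1 + x 2) * c ^ x 3 * Y ^ ∑ l, x l := by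
    intro x
    simp only [mul_pow, prod_mul_distrib, prod_pow_eq_pow_sum, Fin.prod_univ_four]
    simp [w, pow_add]
  rw [hexpand, prod_univ_sum]
  simp only [hterm]
  exact sum_piFinset_eq_sum_factorCoeff hY

namespace Nat.Partition

variable {n : ℕ}

lemma sum_range_count_smul {M : Type*} [AddCommMonoid M] (ν : n.Partition) (f : ℕ → M) :
    ∑ i ∈ range n, ν.parts.count (i + 1) • f (i + 1) = (ν.parts.map f).sum := by
  have hzero : ν.parts.count 0 • f 0 = 0 := by
    rw [Multiset.count_eq_zero_of_notMem fun h => (ν.parts_pos h).false, zero_smul]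
  rw [Finset.sum_multiset_map_count, ← add_zero (∑ i ∈ range n, _), ← hzero,
    ← sum_range_succ' (fun i => ν.parts.count i • f i)]
  refine (sum_subset (fun i hi => ?_) fun i _ hi => ?_).symm
  · exact mem_range.2 (Nat.lt_succ_of_le (le_of_mem_parts (Multiset.mem_toFinset.1 hi)))
  · rw [Multiset.count_eq_zero_of_notMem (mt Multiset.mem_toFinset.2 hi), zero_smul]

lemma sum_range_succ_mul_count (ν : n.Partition) :
    ∑ i ∈ range n, (i + 1) * ν.parts.count (i + 1) = n := by
  simpa [mul_comm, ν.parts_sum] using sum_range_count_smul ν id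

lemma sum_range_count (ν : n.Partition) :
    ∑ i ∈ range n, ν.parts.count (i + 1) = ν.parts.card := by
  simpa using sum_range_count_smul ν (fun _ => (1 : ℕ))

lemma sum_range_mul_count (ν : n.Partition) :
    ∑ i ∈ range n, i * ν.parts.count (i + 1) = n - ν.parts.card := by
  have h := ν.sum_range_succ_mul_count
  rw [← ν.sum_range_count]
  simp only [add_mul, one_mul, sum_add_distrib] at h
  omega

lemma card_parts_le (ν : n.Partition) : ν.parts.card ≤ n :=
  calc ν.parts.card = ∑ i ∈ range n, ν.parts.count (i + 1) := ν.sum_range_count.symm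
    _ ≤ ∑ i ∈ range n, (i + 1) * ν.parts.count (i + 1) :=
      sum_le_sum fun i _ => Nat.le_mul_of_pos_left _ i.succ_pos
    _ = n := ν.sum_range_succ_mul_count

lemma counts_injective :
    Function.Injective fun (ν : n.Partition) (i : Fin n) => ν.parts.count ((i : ℕ) + 1) := by
  intro ν μ h
  ext a
  rcases Nat.eq_zero_or_pos a with rfl | ha
  · rw [Multiset.count_eq_zero_of_notMem fun h => (ν.parts_pos h).false,
      Multiset.count_eq_zero_of_notMem fun h => (μ.parts_pos h).false]
  rcases le_or_gt a n with han | han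
  · simpa [Nat.sub_add_cancel ha] using congrFun h ⟨a - 1, by omega⟩
  · rw [Multiset.count_eq_zero_of_notMem fun h => (le_of_mem_parts h).not_gt han,
      Multiset.count_eq_zero_of_notMem fun h => (le_of_mem_parts h).not_gt han]

lemma sum_counts_eq_sum_filter_piFinset {M : Type*} [AddCommMonoid M] (G : (Fin n → ℕ) → M) :
    ∑ ν : n.Partition, G (fun i => ν.parts.count ((i : ℕ) + 1))
      = ∑ p ∈ Fintype.piFinset (fun _ : Fin n => range (n + 1)) with
          ∑ i : Fin n, ((i : ℕ) + 1) * p i = n, G p := by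
  refine sum_bij (fun ν _ i => ν.parts.count ((i : ℕ) + 1)) (fun ν _ => ?_)
    (fun ν _ μ _ h => counts_injective h) (fun p hp => ?_) fun _ _ => rfl
  · refine mem_filter.2 ⟨Fintype.mem_piFinset.2 fun i => mem_range.2 ?_, ?_⟩
    · exact Nat.lt_succ_of_le ((Multiset.count_le_card _ _).trans ν.card_parts_le)
    · rw [Fin.sum_univ_eq_sum_range (fun i => (i + 1) * ν.parts.count (i + 1))]
      exact sum_range_succ_mul_count ν
  · obtain ⟨-, hp⟩ := mem_filter.1 hp
    have hsum : (∑ i : Fin n, Multiset.replicate (p i) ((i : ℕ) + 1)).sum = n := by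
      simpa [Multiset.sum_sum, mul_comm] using hp
    refine ⟨ofSums n _ hsum, mem_univ _, funext fun k => ?_⟩
    rw [count_ofSums_of_ne_zero hsum (Nat.succ_ne_zero k), Multiset.count_sum',
      sum_eq_single k (fun i _ hik => ?_) (by simp)]
    · simp
    · rw [Multiset.count_replicate, if_neg (fun h => hik (Fin.ext (by omega)))]

end Nat.Partition

namespace PowerSeries

theorem coeff_prod_sum_C_mul_X_pow {R : Type*} [CommSemiring R] (n : ℕ) (g : ℕ → ℕ → R) :
    coeff n (∏ m ∈ range n, ∑ j ∈ range (n + 1), C (g m j) * X ^ ((m + 1) * j))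
      = ∑ ν : n.Partition, ∏ m ∈ range n, g m (ν.parts.count (m + 1)) := by
  simp only [← Fin.prod_univ_eq_prod_range]
  rw [prod_univ_sum,
    Nat.Partition.sum_counts_eq_sum_filter_piFinset (fun p => ∏ i : Fin n, g i (p i)),
    sum_filter, map_sum]
  refine sum_congr rfl fun p _ => ?_
  rw [prod_mul_distrib, ← map_prod, prod_pow_eq_pow_sum, coeff_C_mul_X_pow]
  simp only [eq_comm]

theorem coeff_eq_of_mk_eq {R : Type*} [CommRing R] {n : ℕ} {φ ψ : R⟦X⟧}
    (h : Ideal.Quotient.mk (Ideal.span {X ^ (n + 1)}) φ = Ideal.Quotient.mk _ ψ) :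
    coeff n φ = coeff n ψ := by
  rw [Ideal.Quotient.eq, Ideal.mem_span_singleton, X_pow_dvd_iff] at h
  simpa [sub_eq_zero] using h n n.lt_succ_self

theorem mk_sq_mul_mul_eq_sum_factorCoeff {R : Type*} [CommRing R] (n : ℕ) {k : ℕ} (hk : k ≠ 0)
    (a b c : R) {U W : R⟦X⟧} (hU : U * (1 - C b * X ^ k) = 1)
    (hW : W * (1 - C c * (C b * X ^ k)) = 1) :
    Ideal.Quotient.mk (Ideal.span {X ^ (n + 1)}) ((1 + C a * (C b * X ^ k)) ^ 2 * U * W)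
      = Ideal.Quotient.mk _
          (∑ j ∈ range (n + 1), C (factorCoeff a c j * b ^ j) * X ^ (k * j)) := by
  set π := Ideal.Quotient.mk (Ideal.span {(X : R⟦X⟧) ^ (n + 1)})
  have hY : π (C b * X ^ k) ^ (n + 1) = 0 := by
    rw [← map_pow, Ideal.Quotient.eq_zero_iff_mem, Ideal.mem_span_singleton, mul_pow, ← pow_mul]
    exact (pow_dvd_pow X (Nat.le_mul_of_pos_left _ (Nat.pos_of_ne_zero hk))).mul_left _
  have key := sq_mul_mul_eq_sum_factorCoeff (a := π (C a)) (U := π U) (W := π W)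
    (c := π (C c)) hY
    (by rw [← map_one π, ← map_sub, ← map_mul, hU])
    (by rw [← map_one π, ← map_mul, ← map_sub, ← map_mul, hW])
  simp only [map_mul, map_pow, map_add, map_one, map_sum] at key ⊢
  rw [key]
  refine sum_congr rfl fun j _ => ?_
  rw [← map_factorCoeff, ← map_factorCoeff]
  ring

end PowerSeries

@[simp] lemma finSuccEquiv_PSs : finSuccEquiv ℚ 2 PSs = PowerSeries.X := finSuccEquiv_X_zero

@[simp] lemma finSuccEquiv_PSq : finSuccEquiv ℚ 2 PSq = PowerSeries.C (X 0) :=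
  finSuccEquiv_X_succ 0

@[simp] lemma finSuccEquiv_PSt : finSuccEquiv ℚ 2 PSt = PowerSeries.C (X 1) :=
  finSuccEquiv_X_succ 1

/-- The weight in `ℚ[[q,t]]` of `j` parts of size `m + 1`. -/
noncomputable def partWeight (m j : ℕ) : MvPowerSeries (Fin 2) ℚ :=
  factorCoeff (X 0 * X 1) ((X 0 * X 1) ^ 2) j * ((X 0 * X 1 ^ 2) ^ m) ^ j

lemma prodFactorA_succ (m : ℕ) :
    prodFactorA (m + 1) =
      (1 + PSq * PSt * (PSs ^ (m + 1) * (PSq * PSt ^ 2) ^ m)) ^ 2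
        * (1 - PSs ^ (m + 1) * (PSq * PSt ^ 2) ^ m)⁻¹
        * (1 - (PSq * PSt) ^ 2 * (PSs ^ (m + 1) * (PSq * PSt ^ 2) ^ m))⁻¹ := by
  rw [prodFactorA, show 2 * (m + 1) - 1 = 2 * m + 1 by omega,
    show 2 * (m + 1) - 2 = 2 * m by omega, Nat.add_sub_cancel]
  ring_nf

lemma mk_finSuccEquiv_prodFactorA (n m : ℕ) :
    Ideal.Quotient.mk (Ideal.span {PowerSeries.X ^ (n + 1)})
        (finSuccEquiv ℚ 2 (prodFactorA (m + 1)))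
      = Ideal.Quotient.mk _ (∑ j ∈ range (n + 1),
          PowerSeries.C (partWeight m j) * PowerSeries.X ^ ((m + 1) * j)) := by
  rw [prodFactorA_succ]
  set B := PSs ^ (m + 1) * (PSq * PSt ^ 2) ^ m
  have hB : finSuccEquiv ℚ 2 B
      = PowerSeries.C ((X 0 * X 1 ^ 2) ^ m) * PowerSeries.X ^ (m + 1) := by
    simp [B]
    ring
  have hB0 : constantCoeff B = 0 := by simp [B]
  have hU : finSuccEquiv ℚ 2 (1 - B)⁻¹ * (1 - finSuccEquiv ℚ 2 B) = 1 := by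
    rw [← map_one (finSuccEquiv ℚ 2), ← map_sub, ← map_mul,
      MvPowerSeries.inv_mul_cancel _ (by simp [hB0]), map_one]
  have hW : finSuccEquiv ℚ 2 (1 - (PSq * PSt) ^ 2 * B)⁻¹
      * (1 - PowerSeries.C ((X 0 * X 1) ^ 2) * finSuccEquiv ℚ 2 B) = 1 := by
    have hc : PowerSeries.C ((X 0 * X 1) ^ 2) = finSuccEquiv ℚ 2 ((PSq * PSt) ^ 2) := by simp
    rw [hc, ← map_one (finSuccEquiv ℚ 2), ← map_mul, ← map_sub, ← map_mul,
      MvPowerSeries.inv_mul_cancel _ (by simp [hB0]), map_one]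
  have ha : finSuccEquiv ℚ 2 (PSq * PSt) = PowerSeries.C (X 0 * X 1) := by simp
  rw [hB] at hU hW
  rw [map_mul (finSuccEquiv ℚ 2), map_mul (finSuccEquiv ℚ 2), map_pow, map_add, map_one,
    map_mul (finSuccEquiv ℚ 2), ha, hB,
    PowerSeries.mk_sq_mul_mul_eq_sum_factorCoeff n m.succ_ne_zero _ _ _ hU hW]
  rfl

lemma partitionSumA_eq (n : ℕ) :
    partitionSumA n = ∑ ν : n.Partition, ∏ m ∈ range n,
      factorCoeff (PSq * PSt) ((PSq * PSt) ^ 2) (ν.parts.count (m + 1))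
        * ((PSq * PSt ^ 2) ^ m) ^ ν.parts.count (m + 1) := by
  refine sum_congr rfl fun ν _ => ?_
  have hinner : ∀ j, ∑ x ∈ (Finset.Nat.antidiagonalTuple 4 j).filter
        (fun x => x 1 ≤ 1 ∧ x 2 ≤ 1),
      PSq ^ (x 1 + x 2 + 2 * x 3) * PSt ^ (2 * x 1 + 2 * x 2 + 2 * x 3 - (x 1 + x 2))
        = factorCoeff (PSq * PSt) ((PSq * PSt) ^ 2) j := fun j =>
    sum_congr rfl fun x _ => by
      rw [show 2 * x 1 + 2 * x 2 + 2 * x 3 - (x 1 + x 2) = x 1 + x 2 + 2 * x 3 by omega]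
      ring
  have hlength : PSq ^ (n - ν.parts.card) * PSt ^ (2 * n - 2 * ν.parts.card)
      = ∏ m ∈ range n, ((PSq * PSt ^ 2) ^ m) ^ ν.parts.count (m + 1) := by
    rw [prod_congr rfl fun m _ => (pow_mul _ _ _).symm, prod_pow_eq_pow_sum,
      ν.sum_range_mul_count, ← Nat.mul_sub, mul_pow, pow_mul]
  rw [hlength, ← Finset.Ico_add_one_right_eq_Icc, prod_Ico_eq_prod_range, Nat.add_sub_cancel,
    ← prod_mul_distrib]
  simp only [hinner, add_comm 1]
  exact prod_congr rfl fun m _ => mul_comm _ _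

lemma finSuccEquiv_partitionSumA (n : ℕ) :
    finSuccEquiv ℚ 2 (partitionSumA n) = PowerSeries.C
      (∑ ν : n.Partition, ∏ m ∈ range n, partWeight m (ν.parts.count (m + 1))) := by
  rw [partitionSumA_eq]
  simp [partWeight, map_factorCoeff]

/-- In `ℚ[[s,q,t]]`, the identity
`∏_{m≥1} (1 + s^m q^m t^{2m−1})^2/((1 − s^m q^{m−1} t^{2m−2})(1 − s^m q^{m+1} t^{2m}))
 = ∑_{n≥0} s^n ∑_{ν ⊢ n} q^{n−l(ν)} t^{2n−2l(ν)}
     ∏_{i=1}^n ∑_{r+u₁+u₂+v=a_i, u₁,u₂∈{0,1}} q^{u₁+u₂+2v} t^{2u₁+2u₂+2v−(u₁+u₂)}`,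
stated coefficientwise: for every monomial of `s`-degree `n`, the coefficient
of the (stabilized) partial product `∏_{m=1}^n` equals the coefficient of the
term `s^n · (partition sum)` of the right-hand side. -/
theorem perverse_poincare_generating_series_A0 :
    ∀ (n : ℕ) (d : Fin 3 →₀ ℕ), d 0 = n →
      MvPowerSeries.coeff d (∏ m ∈ Finset.range n, prodFactorA (m + 1))
        = MvPowerSeries.coeff d (PSs ^ n * partitionSumA n) := by
  intro n d hd
  rw [← Finsupp.cons_tail d, hd, ← coeff_coeff_finSuccEquiv, ← coeff_coeff_finSuccEquiv]
  congr 1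
  calc PowerSeries.coeff n (finSuccEquiv ℚ 2 (∏ m ∈ range n, prodFactorA (m + 1)))
      = PowerSeries.coeff n (∏ m ∈ range n, ∑ j ∈ range (n + 1),
          PowerSeries.C (partWeight m j) * PowerSeries.X ^ ((m + 1) * j)) := by
        refine PowerSeries.coeff_eq_of_mk_eq ?_
        simp only [map_prod, mk_finSuccEquiv_prodFactorA]
    _ = ∑ ν : n.Partition, ∏ m ∈ range n, partWeight m (ν.parts.count (m + 1)) :=
        PowerSeries.coeff_prod_sum_C_mul_X_pow n partWeight
    _ = PowerSeries.coeff n (finSuccEquiv ℚ 2 (PSs ^ n * partitionSumA n)) := by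
        rw [map_mul, finSuccEquiv_partitionSumA, map_pow, finSuccEquiv_PSs, mul_comm,
          PowerSeries.coeff_C_mul_X_pow, if_pos rfl]
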